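/- Let r ≥ 3 be an ODD integer. Then for any n ≥ r and any A > 0, there exists f ∈ C^r ∩ Δ^(0)({0}) such that, for every polynomial P_n of degree ≤ n which satisfies P_n ≤ 0 on (-1/n, 0) and P_n^(i)(0) = f^(i)(0) for all 0 ≤ i ≤ r, one has ‖f - P_n‖ > A ‖f^(r)‖. Hence copositive approximation with Hermite interpolation of full order r at the sign-change point 0 is impossible for odd r ≥ 3. -/

import Mathlib

/-!
The witness is `f x = δ x - x ^ r * exp (-(x / a) ^ 2)` with `δ = h ^ (r - 1) / 2` and
`a = δ / (r - 1)!`. Since `r - 1` is even,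
`x ^ (r - 1) * exp (-(x / a) ^ 2) ≤ a ^ (r - 1) * (r - 1)! ≤ δ`, so `f` has the sign of `x`.
The `r`-jet of `f` at `0` is that of `δ x - x ^ r`, while `f⁽ʳ⁾ x = -u⁽ʳ⁾ (x / a)` for
`u t = t ^ r * exp (-t ^ 2)` is bounded independently of `h`.

If `P` interpolates this jet and `‖f - P‖ ≤ A ‖f⁽ʳ⁾‖`, then `R = P - (δ X - X ^ r)` vanishes
to order `r + 1` at `0` and is bounded on `[-1, 1]` by a constant `B` independent of `h`.
Since `deg R ≤ n`, Lagrange interpolation at fixed nodes bounds its coefficients by `K B`, hence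
`|R (-h)| ≤ K B h ^ (r + 1)`. But `P (-h) = R (-h) + h ^ r / 2`, which is positive once
`2 h K B < 1`, contradicting `P ≤ 0` on `(-1/n, 0)`.
-/

/-- The sup norm of `g` on `[a,b]`. -/
noncomputable def supNorm (g : ℝ → ℝ) (a b : ℝ) : ℝ :=
  sSup ((fun x => |g x|) '' Set.Icc a b)

/-- `g ∈ Δ^(0)({0})`: `g ≤ 0` on `[-1,0]` and `g ≥ 0` on `[0,1]`. -/
def Delta0Zero (g : ℝ → ℝ) : Prop :=
  (∀ x ∈ Set.Icc (-1 : ℝ) 0, g x ≤ 0) ∧ (∀ x ∈ Set.Icc (0 : ℝ) 1, 0 ≤ g x)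

open Set

theorem abs_le_supNorm {g : ℝ → ℝ} {a b x : ℝ} (hg : ContinuousOn g (Icc a b))
    (hx : x ∈ Icc a b) : |g x| ≤ supNorm g a b :=
  le_csSup (isCompact_Icc.bddAbove_image hg.abs) ⟨x, hx, rfl⟩

theorem supNorm_le {g : ℝ → ℝ} {a b C : ℝ} (hC : 0 ≤ C)
    (h : ∀ x ∈ Icc a b, |g x| ≤ C) : supNorm g a b ≤ C :=
  Real.sSup_le (by rintro _ ⟨x, hx, rfl⟩; exact h x hx) hC

open Polynomial Real
open scoped Nat

namespace Polynomial

theorem iterate_derivative_eval_zero (p : ℝ[X]) (j : ℕ) :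
    (derivative^[j] p).eval 0 = j ! * p.coeff j := by
  rw [← coeff_zero_eq_eval_zero, coeff_iterate_derivative, zero_add, Nat.descFactorial_self,
    nsmul_eq_mul]

theorem abs_eval_le_pow_mul_sum_abs_coeff {R : ℝ[X]} {n r : ℕ} (hdeg : R.natDegree ≤ n)
    (hR : ∀ j ≤ r, R.coeff j = 0) {x : ℝ} (hx : |x| ≤ 1) :
    |R.eval x| ≤ |x| ^ (r + 1) * ∑ j ∈ Finset.range (n + 1), |R.coeff j| := by
  rw [eval_eq_sum_range' (Nat.lt_succ_of_le hdeg), Finset.mul_sum]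
  refine (Finset.abs_sum_le_sum_abs _ _).trans (Finset.sum_le_sum fun j _ => ?_)
  rw [abs_mul, abs_pow, mul_comm]
  rcases le_or_gt j r with hj | hj
  · simp [hR j hj]
  · exact mul_le_mul_of_nonneg_right (pow_le_pow_of_le_one (abs_nonneg x) hx hj) (abs_nonneg _)

theorem exists_sum_abs_coeff_le (n : ℕ) :
    ∃ K : ℝ, 0 ≤ K ∧ ∀ (R : ℝ[X]) (B : ℝ), R.natDegree ≤ n →
      (∀ x ∈ Icc (-1 : ℝ) 1, |R.eval x| ≤ B) →
        ∑ j ∈ Finset.range (n + 1), |R.coeff j| ≤ K * B := by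
  set s := Finset.range (n + 1)
  set v : ℕ → ℝ := fun i => i / (n + 1)
  have hv : InjOn v s := fun i _ j _ hij => by
    simpa [v, div_left_inj' (by positivity : (n + 1 : ℝ) ≠ 0)] using hij
  have hvI : ∀ i ∈ s, v i ∈ Icc (-1 : ℝ) 1 := fun i hi => by
    have : (i : ℝ) ≤ n := by exact_mod_cast Nat.lt_succ_iff.mp (Finset.mem_range.mp hi)
    constructor
    · exact (neg_one_lt_zero.trans_le (by positivity)).le
    · rw [div_le_one (by positivity)]; linarith
  refine ⟨∑ j ∈ s, ∑ i ∈ s, |(Lagrange.basis s v i).coeff j|, by positivity, ?_⟩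
  intro R B hdeg hB
  have hR : R = Lagrange.interpolate s v (fun i => R.eval (v i)) :=
    Lagrange.eq_interpolate hv (by
      rw [Finset.card_range]
      exact (degree_le_of_natDegree_le hdeg).trans_lt (WithBot.coe_lt_coe.mpr n.lt_succ_self))
  rw [Finset.sum_mul]
  refine Finset.sum_le_sum fun j _ => ?_
  rw [hR, Lagrange.interpolate_apply, finsetSum_coeff, Finset.sum_mul]
  refine (Finset.abs_sum_le_sum_abs _ _).trans (Finset.sum_le_sum fun i hi => ?_)
  rw [coeff_C_mul, abs_mul, mul_comm]
  exact mul_le_mul_of_nonneg_left (hB _ (hvI i hi)) (abs_nonneg _)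

theorem coeff_sub_eq_zero_of_iterate_derivative_eval_zero {P Q : ℝ[X]} {r : ℕ}
    (h : ∀ i ≤ r, (derivative^[i] P).eval 0 = (derivative^[i] Q).eval 0) :
    ∀ j ≤ r, (P - Q).coeff j = 0 := fun j hj => by
  have := h j hj
  rw [iterate_derivative_eval_zero, iterate_derivative_eval_zero] at this
  rw [coeff_sub, mul_left_cancel₀ (Nat.cast_ne_zero.mpr j.factorial_ne_zero) this, sub_self]

theorem eval_neg_pos_of_sub_coeff_eq_zero {P : ℝ[X]} {r n : ℕ} (hr : Odd r) {h : ℝ}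
    (hh0 : 0 < h) (hh1 : h ≤ 1) (hdeg : (P - (C (h ^ (r - 1) / 2) * X - X ^ r)).natDegree ≤ n)
    (hjet : ∀ j ≤ r, (P - (C (h ^ (r - 1) / 2) * X - X ^ r)).coeff j = 0)
    (hsmall : 2 * h * ∑ j ∈ Finset.range (n + 1),
      |(P - (C (h ^ (r - 1) / 2) * X - X ^ r)).coeff j| < 1) :
    0 < P.eval (-h) := by
  set R := P - (C (h ^ (r - 1) / 2) * X - X ^ r)
  have hR := abs_eval_le_pow_mul_sum_abs_coeff hdeg hjet (x := -h)
    (by rwa [abs_neg, abs_of_pos hh0])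
  have hP : P.eval (-h) = R.eval (-h) + h ^ r / 2 := by
    obtain ⟨k, rfl⟩ := hr
    simp only [R, eval_sub, eval_mul, eval_C, eval_X, eval_pow, Nat.add_sub_cancel,
      Odd.neg_pow ⟨k, rfl⟩]
    ring
  rw [abs_neg, abs_of_pos hh0] at hR
  have hRsmall : |R.eval (-h)| < h ^ r / 2 := calc
    _ ≤ h ^ (r + 1) * ∑ j ∈ Finset.range (n + 1), |R.coeff j| := hR
    _ = h ^ r / 2 * (2 * h * ∑ j ∈ Finset.range (n + 1), |R.coeff j|) := by ring
    _ < h ^ r / 2 := mul_lt_of_lt_one_right (by positivity) hsmall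
  linarith [neg_abs_le (R.eval (-h))]

end Polynomial

noncomputable def gaussStep (q : ℝ[X]) : ℝ[X] := derivative q - C 2 * X * q

theorem hasDerivAt_eval_mul_exp_neg_sq (q : ℝ[X]) (t : ℝ) :
    HasDerivAt (fun s => q.eval s * exp (-s ^ 2)) ((gaussStep q).eval t * exp (-t ^ 2)) t := by
  have hexp : HasDerivAt (fun s => exp (-s ^ 2)) (exp (-t ^ 2) * -(2 * t)) t := by
    simpa using ((hasDerivAt_pow 2 t).neg).exp
  have hq : HasDerivAt (fun s => q.eval s) (q.derivative.eval t) t := q.hasDerivAt t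
  refine (hq.mul hexp).congr_deriv ?_
  simp only [gaussStep, eval_sub, eval_mul, eval_C, eval_X]
  ring

theorem iteratedDeriv_eval_mul_exp_neg_sq (m : ℕ) (q : ℝ[X]) :
    iteratedDeriv m (fun s => q.eval s * exp (-s ^ 2)) =
      fun t => (gaussStep^[m] q).eval t * exp (-t ^ 2) := by
  induction m generalizing q with
  | zero => rfl
  | succ m ih =>
    rw [iteratedDeriv_succ', funext fun t => (hasDerivAt_eval_mul_exp_neg_sq q t).deriv, ih,
      Function.iterate_succ_apply]

theorem contDiff_eval_mul_exp_neg_sq (q : ℝ[X]) {n : WithTop ℕ∞} :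
    ContDiff ℝ n fun s => q.eval s * exp (-s ^ 2) := by
  have hq : ContDiff ℝ n fun s : ℝ => q.eval s := by
    simpa using q.contDiff_aeval (𝕜 := ℝ) n
  exact hq.mul (contDiff_exp.comp (contDiff_id.pow 2).neg)

theorem gaussStep_iterate_X_pow {r m : ℕ} (hm : m ≤ r) :
    ∃ s : ℝ[X], gaussStep^[m] (X ^ r) = X ^ (r - m) * s ∧ s.eval 0 = r.descFactorial m := by
  induction m with
  | zero => exact ⟨1, by simp, by simp⟩
  | succ m ih =>
    obtain ⟨s, hs, hs0⟩ := ih (by omega)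
    obtain ⟨k, hk⟩ : ∃ k, r - m = k + 1 := ⟨r - m - 1, by omega⟩
    refine ⟨C ((k : ℝ) + 1) * s + X * derivative s - C 2 * X ^ 2 * s, ?_, ?_⟩
    · rw [Function.iterate_succ_apply', hs, hk, show r - (m + 1) = k by omega]
      simp only [gaussStep, derivative_mul, derivative_X_pow]
      push_cast
      ring
    · simp only [eval_sub, eval_add, eval_mul, eval_C, eval_X, eval_pow, hs0,
        Nat.descFactorial_succ, hk]
      push_cast
      ring

theorem eval_zero_gaussStep_iterate_X_pow {r m : ℕ} (hm : m ≤ r) :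
    (gaussStep^[m] (X ^ r)).eval 0 = (derivative^[m] (X ^ r : ℝ[X])).eval 0 := by
  obtain ⟨s, hs, hs0⟩ := gaussStep_iterate_X_pow hm
  simp [hs, hs0, iterate_derivative_X_pow_eq_smul, mul_comm]

theorem abs_pow_mul_exp_neg_sq_le (t : ℝ) (i : ℕ) : |t| ^ i * exp (-t ^ 2) ≤ i ! := by
  have hexp : exp (-t ^ 2) ≤ 1 := exp_le_one_iff.mpr (neg_nonpos.mpr (sq_nonneg t))
  have hfac : (1 : ℝ) ≤ i ! := Nat.one_le_cast.mpr i.factorial_pos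
  rcases le_or_gt |t| 1 with ht | ht
  · calc |t| ^ i * exp (-t ^ 2) ≤ 1 * 1 :=
          mul_le_mul (pow_le_one₀ (abs_nonneg t) ht) hexp (exp_pos _).le zero_le_one
      _ ≤ i ! := by rwa [one_mul]
  · have hpow : |t| ^ i ≤ (t ^ 2) ^ i :=
      pow_le_pow_left₀ (abs_nonneg t) (by nlinarith [sq_abs t]) i
    have hgrowth := pow_div_factorial_le_exp _ (sq_nonneg t) i
    rw [div_le_iff₀ (by positivity)] at hgrowth
    rw [exp_neg, ← div_eq_mul_inv, div_le_iff₀ (exp_pos _)]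
    linarith

theorem pow_mul_exp_le_of_even {r : ℕ} (hr : Even r) {a : ℝ} (ha : 0 < a) (x : ℝ) :
    x ^ r * exp (-(a⁻¹ * x) ^ 2) ≤ a ^ r * r ! := by
  have hx : x ^ r = a ^ r * |a⁻¹ * x| ^ r := by
    rw [hr.pow_abs, mul_pow, ← mul_assoc, ← mul_pow, mul_inv_cancel₀ ha.ne', one_pow, one_mul]
  rw [hx, mul_assoc]
  exact mul_le_mul_of_nonneg_left (abs_pow_mul_exp_neg_sq_le _ r) (by positivity)

theorem exists_abs_eval_mul_exp_neg_sq_le (q : ℝ[X]) :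
    ∃ C : ℝ, ∀ t, |q.eval t * exp (-t ^ 2)| ≤ C := by
  refine ⟨∑ i ∈ Finset.range (q.natDegree + 1), |q.coeff i| * i !, fun t => ?_⟩
  calc |q.eval t * exp (-t ^ 2)|
      ≤ (∑ i ∈ Finset.range (q.natDegree + 1), |q.coeff i| * |t| ^ i) * exp (-t ^ 2) := by
        rw [abs_mul, abs_of_pos (exp_pos _), eval_eq_sum_range]
        gcongr
        refine (Finset.abs_sum_le_sum_abs _ _).trans_eq ?_
        simp only [abs_mul, abs_pow]
    _ = ∑ i ∈ Finset.range (q.natDegree + 1), |q.coeff i| * (|t| ^ i * exp (-t ^ 2)) := by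
        rw [Finset.sum_mul]; simp only [mul_assoc]
    _ ≤ _ := by gcongr with i; exact abs_pow_mul_exp_neg_sq_le t i

/-- `δ x - x ^ r * exp (-(x / a) ^ 2)` (see `linearSubDampedPow_apply`), written as
`δ x - a ^ r * u (x / a)` with `u t = t ^ r * exp (-t ^ 2)` so that iterated derivatives scale. -/
noncomputable def linearSubDampedPow (r : ℕ) (δ a x : ℝ) : ℝ :=
  δ * x - a ^ r * ((X ^ r : ℝ[X]).eval (a⁻¹ * x) * exp (-(a⁻¹ * x) ^ 2))

section linearSubDampedPow

variable {r : ℕ} {δ a : ℝ}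

theorem linearSubDampedPow_apply (ha : a ≠ 0) (x : ℝ) :
    linearSubDampedPow r δ a x = δ * x - x ^ r * exp (-(a⁻¹ * x) ^ 2) := by
  simp [linearSubDampedPow, ← mul_assoc, ← mul_pow, mul_inv_cancel₀ ha]

theorem contDiff_linearSubDampedPow {n : WithTop ℕ∞} :
    ContDiff ℝ n (linearSubDampedPow r δ a) :=
  (contDiff_const.mul contDiff_id).sub
    (contDiff_const.mul ((contDiff_eval_mul_exp_neg_sq _).comp (contDiff_const.mul contDiff_id)))

theorem iteratedDeriv_linearSubDampedPow (i : ℕ) (x : ℝ) :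
    iteratedDeriv i (linearSubDampedPow r δ a) x =
      δ * iteratedDeriv i (fun y => y) x -
        a ^ r * (a⁻¹ ^ i *
          ((gaussStep^[i] (X ^ r)).eval (a⁻¹ * x) * exp (-(a⁻¹ * x) ^ 2))) := by
  set g : ℝ → ℝ := fun s => (X ^ r : ℝ[X]).eval s * exp (-s ^ 2)
  have hg : ContDiff ℝ i g := contDiff_eval_mul_exp_neg_sq _
  have hscaled : ContDiff ℝ i fun y => a ^ r * g (a⁻¹ * y) :=
    contDiff_const.mul (hg.comp (contDiff_const.mul contDiff_id))
  change iteratedDeriv i (fun y => δ * y - a ^ r * g (a⁻¹ * y)) x = _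
  rw [iteratedDeriv_fun_sub (by fun_prop) hscaled.contDiffAt, iteratedDeriv_const_mul_field,
    iteratedDeriv_const_mul_field, iteratedDeriv_comp_const_mul hg,
    iteratedDeriv_eval_mul_exp_neg_sq]

theorem iteratedDeriv_linearSubDampedPow_zero (ha : a ≠ 0) {i : ℕ} (hi : i ≤ r) :
    iteratedDeriv i (linearSubDampedPow r δ a) 0 = (derivative^[i] (C δ * X - X ^ r)).eval 0 := by
  rw [iteratedDeriv_linearSubDampedPow, iteratedDeriv_fun_id_zero, mul_zero,
    eval_zero_gaussStep_iterate_X_pow hi]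
  simp only [iterate_derivative_sub, iterate_derivative_C_mul, eval_sub, eval_mul, eval_C,
    iterate_derivative_eval_zero, coeff_X, coeff_X_pow]
  rcases hi.eq_or_lt with rfl | hlt
  · rcases eq_or_ne i 1 with rfl | hi1 <;> simp [*, eq_comm]
  · rcases eq_or_ne i 1 with rfl | hi1 <;> simp [*, hlt.ne, eq_comm]

theorem iteratedDerivWithin_Icc_linearSubDampedPow (i : ℕ) {x : ℝ} (hx : x ∈ Icc (-1 : ℝ) 1) :
    iteratedDerivWithin i (linearSubDampedPow r δ a) (Icc (-1) 1) x =
      iteratedDeriv i (linearSubDampedPow r δ a) x :=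
  iteratedDerivWithin_eq_iteratedDeriv (uniqueDiffOn_Icc (by norm_num))
    contDiff_linearSubDampedPow.contDiffAt hx

theorem exists_supNorm_iteratedDerivWithin_linearSubDampedPow_le (hr : 2 ≤ r) :
    ∃ G : ℝ, 0 ≤ G ∧ ∀ δ a : ℝ, a ≠ 0 →
      supNorm (iteratedDerivWithin r (linearSubDampedPow r δ a) (Icc (-1) 1)) (-1) 1 ≤ G := by
  obtain ⟨G, hG⟩ := exists_abs_eval_mul_exp_neg_sq_le (gaussStep^[r] (X ^ r))
  refine ⟨|G|, abs_nonneg G, fun δ a ha => supNorm_le (abs_nonneg G) fun x hx => ?_⟩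
  rw [iteratedDerivWithin_Icc_linearSubDampedPow r hx, iteratedDeriv_linearSubDampedPow,
    iteratedDeriv_fun_id, if_neg (by omega), if_neg (by omega), mul_zero, zero_sub, abs_neg,
    ← mul_assoc, inv_pow, mul_inv_cancel₀ (pow_ne_zero r ha), one_mul]
  exact (hG _).trans (le_abs_self G)

theorem delta0Zero_linearSubDampedPow (hr : Odd r) (hr1 : r ≠ 1) (hδ0 : 0 < δ)
    (hδ1 : δ ≤ 1) :
    Delta0Zero (linearSubDampedPow r δ (δ / (r - 1)!)) := by
  set a := δ / (r - 1)!
  have ha : 0 < a := by positivity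
  have ha1 : a ≤ 1 := (div_le_self hδ0.le (Nat.one_le_cast.mpr (r - 1).factorial_pos)).trans hδ1
  have hbracket : ∀ x, 0 ≤ δ - x ^ (r - 1) * exp (-(a⁻¹ * x) ^ 2) := fun x => by
    have hpow := pow_mul_exp_le_of_even (Nat.Odd.sub_odd hr odd_one) ha x
    have hδa : a ^ (r - 1) * (r - 1)! ≤ a * (r - 1)! := by
      gcongr; exact pow_le_of_le_one ha.le ha1 (by have := hr.pos; omega)
    rw [div_mul_cancel₀ _ (by positivity)] at hδa
    linarith
  have hfactor :
      ∀ x, linearSubDampedPow r δ a x = x * (δ - x ^ (r - 1) * exp (-(a⁻¹ * x) ^ 2)) :=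
    fun x => by
      rw [linearSubDampedPow_apply ha.ne', mul_sub, ← mul_assoc, ← pow_succ',
        Nat.sub_add_cancel hr.pos, mul_comm x δ]
  refine ⟨fun x hx => ?_, fun x hx => ?_⟩ <;> rw [hfactor]
  · exact mul_nonpos_of_nonpos_of_nonneg hx.2 (hbracket x)
  · exact mul_nonneg hx.1 (hbracket x)

theorem abs_linearSubDampedPow_sub_le (ha : a ≠ 0) (x : ℝ) :
    |linearSubDampedPow r δ a x - (C δ * X - X ^ r).eval x| ≤ |x| ^ r := by
  have hexp : exp (-(a⁻¹ * x) ^ 2) ≤ 1 := exp_le_one_iff.mpr (neg_nonpos.mpr (sq_nonneg _))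
  rw [linearSubDampedPow_apply ha]
  simp only [eval_sub, eval_mul, eval_C, eval_X, eval_pow]
  rw [show δ * x - x ^ r * exp (-(a⁻¹ * x) ^ 2) - (δ * x - x ^ r) =
    x ^ r * (1 - exp (-(a⁻¹ * x) ^ 2)) by ring, abs_mul, abs_pow]
  refine mul_le_of_le_one_right (by positivity) (abs_le.mpr ⟨?_, ?_⟩) <;>
    linarith [exp_pos (-(a⁻¹ * x) ^ 2)]

theorem abs_eval_sub_le_supNorm_add_one (ha : a ≠ 0) (P : ℝ[X]) {x : ℝ}
    (hx : x ∈ Icc (-1 : ℝ) 1) :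
    |(P - (C δ * X - X ^ r)).eval x| ≤
      supNorm (fun y => linearSubDampedPow r δ a y - P.eval y) (-1) 1 + 1 := calc
  |(P - (C δ * X - X ^ r)).eval x|
      = |(linearSubDampedPow r δ a x - P.eval x) -
          (linearSubDampedPow r δ a x - (C δ * X - X ^ r).eval x)| := by
        rw [eval_sub, abs_sub_comm]; congr 1; ring
  _ ≤ supNorm (fun y => linearSubDampedPow r δ a y - P.eval y) (-1) 1 + |x| ^ r :=
    (abs_sub _ _).trans (add_le_add (abs_le_supNorm
      ((contDiff_linearSubDampedPow (n := 0)).continuous.sub P.continuous).continuousOn hx)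
      (abs_linearSubDampedPow_sub_le ha x))
  _ ≤ _ := by gcongr; exact pow_le_one₀ (abs_nonneg x) (abs_le.mpr hx)

end linearSubDampedPow

/-- Copositive approximation with interpolation at `Y_s = {0}`, negative result for
`f ∈ C^r` with odd `r ≥ 3`: for any `n ≥ r` and `A > 0`, there is
`f ∈ C^r[-1,1] ∩ Δ^(0)({0})` such that any polynomial of degree ≤ n, nonpositive on
`(-1/n, 0)`, with `P_n^{(i)}(0) = f^{(i)}(0)` for `0 ≤ i ≤ r`, satisfies
`‖f - P_n‖ > A ‖f^{(r)}‖`. -/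
theorem statement17 (r : ℕ) (hr : 3 ≤ r) (hro : Odd r) (n : ℕ) (hn : r ≤ n)
    (A : ℝ) (hA : 0 < A) :
    ∃ f : ℝ → ℝ, ContDiffOn ℝ r f (Set.Icc (-1 : ℝ) 1) ∧ Delta0Zero f ∧
      ∀ P : Polynomial ℝ, P.natDegree ≤ n →
        (∀ x ∈ Set.Ioo (-(1 / n) : ℝ) 0, P.eval x ≤ 0) →
        (∀ i : ℕ, i ≤ r → (Polynomial.derivative^[i] P).eval 0
            = iteratedDerivWithin i f (Set.Icc (-1 : ℝ) 1) 0) →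
        A * supNorm (iteratedDerivWithin r f (Set.Icc (-1 : ℝ) 1)) (-1) 1
          < supNorm (fun x => f x - P.eval x) (-1) 1 := by
  obtain ⟨G, hG0, hG⟩ :=
    exists_supNorm_iteratedDerivWithin_linearSubDampedPow_le (r := r) (by omega)
  obtain ⟨K, hK0, hK⟩ := exists_sum_abs_coeff_le n
  set B := A * G + 1
  have hn3 : (3 : ℝ) ≤ n := by exact_mod_cast hr.trans hn
  obtain ⟨h, hh0, hhn, hh1, hhB⟩ :
      ∃ h : ℝ, 0 < h ∧ h < 1 / n ∧ h ≤ 1 ∧ 2 * h * (K * B) < 1 := by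
    have hKB : 0 ≤ K * B := by positivity
    refine ⟨1 / (2 * n * (K * B + 1)), by positivity, ?_, ?_, ?_⟩
    · gcongr; nlinarith
    · rw [div_le_one (by positivity)]; nlinarith
    · field_simp; nlinarith
  set δ := h ^ (r - 1) / 2
  have hδ1 : δ ≤ 1 := (div_le_self (by positivity) one_le_two).trans (pow_le_one₀ hh0.le hh1)
  have ha : δ / (r - 1)! ≠ 0 := by positivity
  refine ⟨linearSubDampedPow r δ (δ / (r - 1)!), contDiff_linearSubDampedPow.contDiffOn,
    delta0Zero_linearSubDampedPow hro (by omega) (by positivity) hδ1, fun P hdeg hneg hjet => ?_⟩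
  by_contra! hfar
  have hRB : ∀ x ∈ Icc (-1 : ℝ) 1, |(P - (C δ * X - X ^ r)).eval x| ≤ B := fun x hx =>
    (abs_eval_sub_le_supNorm_add_one ha P hx).trans
      (add_le_add (hfar.trans (mul_le_mul_of_nonneg_left (hG _ _ ha) hA.le)) le_rfl)
  have hdegR : (P - (C δ * X - X ^ r)).natDegree ≤ n :=
    (natDegree_sub_le _ _).trans (max_le hdeg (by compute_degree; omega))
  have hPh : P.eval (-h) ≤ 0 := hneg _ ⟨by linarith, by linarith⟩
  refine hPh.not_gt (eval_neg_pos_of_sub_coeff_eq_zero hro hh0 hh1 hdegR ?_ ?_)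
  · exact coeff_sub_eq_zero_of_iterate_derivative_eval_zero fun i hi => by
      rw [hjet i hi, iteratedDerivWithin_Icc_linearSubDampedPow i (by norm_num),
        iteratedDeriv_linearSubDampedPow_zero ha hi]
  · exact (mul_le_mul_of_nonneg_left (hK _ _ hdegR hRB) (by positivity)).trans_lt hhB
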